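/- arXiv:1112.0946 — 6 statements merged into one kernel-verified Lean document; each statement's English description precedes it below -/
import Mathlib

section
/- For any integer-valued sequence a : ℕ → ℤ and any positive integer n, letting F^Δ(n,k) = ∑_{λ₁+...+λ_k=n, λᵢ>0} a(λ₁)···a(λ_k) for each k with 1 ≤ k ≤ n, the rational number ∑_{k=1}^{n} (n·F^Δ(n,k))/k is an integer. -/
open Finset BigOperators

/-- The compositae: sum over compositions of `n` into `k` positive parts
of products of `a`-values. -/
def compositae (a : ℕ → ℤ) (n k : ℕ) : ℤ :=
  ∑ l ∈ (Finset.Nat.antidiagonalTuple k n).filter (fun l => ∀ i, 0 < l i),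
    ∏ i, a (l i)

private abbrev S (k n : ℕ) : Finset (Fin k → ℕ) :=
  (Finset.Nat.antidiagonalTuple k n).filter (fun l => ∀ i, 0 < l i)

private lemma mem_S {k n : ℕ} {l : Fin k → ℕ} :
    l ∈ S k n ↔ (∑ i, l i) = n ∧ ∀ i, 0 < l i := by
  simp [S, Finset.Nat.mem_antidiagonalTuple]

-- symmetry
private lemma symm_lem (a : ℕ → ℤ) (n k : ℕ) (i : Fin (k+1)) :
    ∑ l ∈ S (k+1) n, (l i : ℤ) * ∏ j, a (l j)
      = ∑ l ∈ S (k+1) n, (l 0 : ℤ) * ∏ j, a (l j) := by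
  have hswap : ∀ l : Fin (k+1) → ℕ, l ∈ S (k+1) n →
      (l ∘ Equiv.swap (0 : Fin (k+1)) i) ∈ S (k+1) n := by
    intro l hl
    rw [mem_S] at hl ⊢
    refine ⟨?_, fun j => hl.2 _⟩
    rw [← hl.1]
    exact Equiv.sum_comp (Equiv.swap 0 i) l
  refine Finset.sum_nbij' (fun l => l ∘ Equiv.swap 0 i) (fun l => l ∘ Equiv.swap 0 i)
    hswap hswap ?_ ?_ ?_
  · intro l hl; ext j; simp
  · intro l hl; ext j; simp
  · intro l hl
    simp only [Function.comp]
    rw [Equiv.swap_apply_left]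
    congr 1
    exact (Equiv.prod_comp (Equiv.swap 0 i) (fun j => a (l j))).symm

-- peel
private lemma peel (a : ℕ → ℤ) (n k : ℕ) :
    ∑ l ∈ S (k+1) n, (l 0 : ℤ) * ∏ j, a (l j)
      = ∑ j ∈ Finset.Icc 1 n, (j : ℤ) * a j * compositae a (n-j) k := by
  have : ∀ j ∈ Finset.Icc 1 n, (j : ℤ) * a j * compositae a (n-j) k
      = ∑ t ∈ S k (n-j), (j : ℤ) * a j * ∏ i, a (t i) := by
    intro j hj
    rw [compositae, Finset.mul_sum]
  rw [Finset.sum_congr rfl this, Finset.sum_sigma']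
  refine (Finset.sum_nbij' (fun p => Fin.cons p.1 p.2) (fun l => ⟨l 0, Fin.tail l⟩)
    ?_ ?_ ?_ ?_ ?_).symm
  · intro p hp
    rw [Finset.mem_sigma] at hp
    obtain ⟨h1, h2⟩ := hp
    rw [Finset.mem_Icc] at h1
    rw [mem_S] at h2 ⊢
    constructor
    · rw [Fin.sum_univ_succ]
      simp only [Fin.cons_zero, Fin.cons_succ]
      rw [h2.1]; omega
    · intro i
      refine Fin.cases ?_ ?_ i
      · simpa using (show 0 < p.fst by omega)
      · intro j; simpa using h2.2 j
  · intro l hl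
    rw [mem_S] at hl
    have h0 : 0 < l 0 := hl.2 0
    have hle : l 0 ≤ n := by
      rw [← hl.1]
      exact Finset.single_le_sum (fun i _ => Nat.zero_le _) (Finset.mem_univ 0)
    rw [Finset.mem_sigma, Finset.mem_Icc]
    refine ⟨⟨h0, hle⟩, ?_⟩
    rw [mem_S]
    constructor
    · have := hl.1
      rw [Fin.sum_univ_succ] at this
      have : ∑ i, Fin.tail l i = n - l 0 := by
        simp only [Fin.tail]; omega
      exact this
    · intro i; exact hl.2 i.succ
  · intro p hp
    simp [Fin.tail_cons]
  · intro l hl; exact Fin.cons_self_tail l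
  · intro p hp
    simp only [Fin.cons_zero]
    rw [Fin.prod_univ_succ]
    simp only [Fin.cons_zero, Fin.cons_succ]
    ring

private lemma key (a : ℕ → ℤ) (n k : ℕ) :
    (n : ℤ) * compositae a n (k+1)
      = (k+1) * ∑ j ∈ Finset.Icc 1 n, (j : ℤ) * a j * compositae a (n-j) k := by
  rw [← peel]
  have h1 : (n : ℤ) * compositae a n (k+1)
      = ∑ l ∈ S (k+1) n, ∑ i, (l i : ℤ) * ∏ j, a (l j) := by
    rw [compositae, Finset.mul_sum]
    refine Finset.sum_congr rfl ?_
    intro l hl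
    rw [mem_S] at hl
    rw [← Finset.sum_mul]
    congr 1
    rw [← hl.1]
    push_cast
    ring
  rw [h1, Finset.sum_comm]
  rw [Finset.sum_congr rfl (fun i _ => symm_lem a n k i)]
  simp [Finset.sum_const, Finset.card_univ]

theorem stmt_0 (a : ℕ → ℤ) (n : ℕ) (hn : 0 < n) :
    ∃ m : ℤ, ∑ k ∈ Finset.Icc 1 n, (n : ℚ) * (compositae a n k : ℚ) / k = m := by
  refine ⟨∑ k ∈ Finset.Icc 1 n, ∑ j ∈ Finset.Icc 1 n, (j : ℤ) * a j * compositae a (n-j) (k-1), ?_⟩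
  push_cast
  refine Finset.sum_congr rfl ?_
  intro k hk
  rw [Finset.mem_Icc] at hk
  obtain ⟨hk1, hk2⟩ := hk
  obtain ⟨m, rfl⟩ : ∃ m, k = m + 1 := ⟨k-1, by omega⟩
  have hkey := congrArg (fun z : ℤ => (z : ℚ)) (key a n m)
  rw [Nat.add_sub_cancel]
  rw [div_eq_iff (by positivity : ((m+1 : ℕ) : ℚ) ≠ 0)]
  push_cast at hkey ⊢
  rw [hkey]
  ring
end

section
/- Let a : ℕ → ℤ be any integer sequence with a(1) = a₁, and let n be a prime number. Then ∑_{k=1}^{n-1} (1/k) · F^Δ(n,k) is an integer, where F^Δ(n,k) = ∑_{λ₁+...+λ_k=n, λᵢ>0} a(λ₁)···a(λ_k). -/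
/-!
Rotating a composition `(λ₁, …, λ_k)` of `n` cyclically preserves the product
`a(λ₁)⋯a(λ_k)`. If a rotation by `j` fixes a composition, the composition is constant on the
cosets of the subgroup generated by `j` in `ℤ/k`, so the order of `j` divides `n`; as that order
also divides `k < n` and `n` is prime, `j = 0`. Hence every rotation orbit has exactly `k`
elements, and `k ∣ F^Δ(n,k)` for `1 ≤ k < n`, which makes every summand `F^Δ(n,k)/k` an
integer.
-/

open Finset BigOperators

open Function

theorem apply_iterate_eq_of_mapsTo {α β : Type*} {f : α → α} {s : Set α}
    (hs : Set.MapsTo f s s) {w : α → β} (hw : ∀ x ∈ s, w (f x) = w x) {x : α}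
    (hx : x ∈ s) (m : ℕ) : w (f^[m] x) = w x := by
  induction m with
  | zero => rfl
  | succ m ih => rw [iterate_succ_apply', hw _ (hs.iterate m hx), ih]

theorem natCast_dvd_sum_of_minimalPeriod_eq {α R : Type*} [CommSemiring R] {f : α → α}
    {s : Finset α} {d : ℕ} (hd : 0 < d) (hs : Set.MapsTo f s s)
    (hper : ∀ x ∈ s, minimalPeriod f x = d) {w : α → R} (hw : ∀ x ∈ s, w (f x) = w x) :
    (d : R) ∣ ∑ x ∈ s, w x := by
  classical
  induction s using Finset.strongInduction with
  | H s ih =>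
  obtain rfl | ⟨x, hx⟩ := s.eq_empty_or_nonempty
  · simp
  set orbit := (range d).image (f^[·] x)
  have orbit_subset : orbit ⊆ s := by
    intro y hy
    obtain ⟨m, -, rfl⟩ := mem_image.1 hy
    exact hs.iterate m hx
  have sum_orbit : ∑ y ∈ orbit, w y = d * w x := by
    rw [sum_image, sum_congr rfl fun m _ => apply_iterate_eq_of_mapsTo hs hw hx m, sum_const,
      card_range, nsmul_eq_mul]
    rw [coe_range, ← hper x hx]
    exact iterate_injOn_Iio_minimalPeriod
  -- `f` is injective on periodic points, so the complement of an orbit is again invariant.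
  have rest_mapsTo : Set.MapsTo f ↑(s \ orbit) ↑(s \ orbit) := by
    intro y hy
    simp only [coe_sdiff, Set.mem_sdiff, mem_coe] at hy ⊢
    refine ⟨hs hy.1, fun hfy => hy.2 ?_⟩
    obtain ⟨m, -, hm⟩ := mem_image.1 hfy
    have hy_back : f^[d - 1] (f y) = y := by
      rw [← iterate_succ_apply, Nat.succ_eq_add_one, Nat.sub_add_cancel hd, ← hper y hy.1,
        iterate_minimalPeriod]
    have hx_mod : f^[(d - 1 + m) % d] x = f^[d - 1 + m] x := by
      rw [← hper x hx, iterate_mod_minimalPeriod_eq]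
    refine mem_image.2 ⟨(d - 1 + m) % d, mem_range.2 (Nat.mod_lt _ hd), ?_⟩
    rw [hx_mod, iterate_add_apply, hm, hy_back]
  rw [← sum_sdiff orbit_subset, sum_orbit]
  refine dvd_add ?_ (dvd_mul_right _ _)
  have x_mem_orbit : x ∈ orbit := mem_image.2 ⟨0, mem_range.2 hd, rfl⟩
  exact ih _ (sdiff_ssubset orbit_subset ⟨x, x_mem_orbit⟩) rest_mapsTo
    (fun y hy => hper y (mem_sdiff.1 hy).1) (fun y hy => hw y (mem_sdiff.1 hy).1)

theorem minimalPeriod_add_right {G : Type*} [AddGroup G] (j x : G) :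
    minimalPeriod (· + j) x = addOrderOf j := by
  refine minimalPeriod_eq_minimalPeriod_iff.2 fun m => ?_
  simp only [IsPeriodicPt, IsFixedPt, add_right_iterate, add_left_iterate, add_zero,
    add_eq_left]

theorem addOrderOf_dvd_sum_of_add_right_invariant {G R : Type*} [AddGroup G] [Fintype G]
    [CommSemiring R] {j : G} {w : G → R} (hw : ∀ x, w (x + j) = w x) :
    (addOrderOf j : R) ∣ ∑ x, w x :=
  natCast_dvd_sum_of_minimalPeriod_eq (addOrderOf_pos j) (fun _ _ => mem_coe.2 (mem_univ _))
    (fun x _ => minimalPeriod_add_right j x) (fun x _ => hw x)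

theorem eq_zero_of_add_right_invariant_of_sum_eq_prime {G : Type*} [AddGroup G] [Fintype G]
    {p : ℕ} (hp : p.Prime) (hcard : Fintype.card G < p) {l : G → ℕ} (hl : ∑ x, l x = p)
    {j : G} (hj : ∀ x, l (x + j) = l x) : j = 0 := by
  have hdvd_p : addOrderOf j ∣ p := by
    simpa [hl] using addOrderOf_dvd_sum_of_add_right_invariant (R := ℕ) hj
  have hlt_p : addOrderOf j < p :=
    (Nat.le_of_dvd Fintype.card_pos addOrderOf_dvd_card).trans_lt hcard
  exact AddMonoid.addOrderOf_eq_one_iff.1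
    ((hp.eq_one_or_self_of_dvd _ hdvd_p).resolve_right hlt_p.ne)

theorem iterate_comp_add_right {G α : Type*} [AddMonoid G] (j : G) (m : ℕ) :
    (fun (l : G → α) x => l (x + j))^[m] = fun l x => l (x + m • j) := by
  induction m with
  | zero => simp only [iterate_zero, zero_nsmul, add_zero]; rfl
  | succ m ih =>
    rw [iterate_succ', ih, succ_nsmul']
    funext l x
    simp only [comp_apply, add_assoc]

theorem minimalPeriod_comp_add_right_of_sum_eq_prime {G : Type*} [AddGroup G] [Fintype G]
    {p : ℕ} (hp : p.Prime) (hcard : Fintype.card G < p) {l : G → ℕ} (hl : ∑ x, l x = p)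
    (j : G) :
    minimalPeriod (fun (l : G → ℕ) x => l (x + j)) l = addOrderOf j := by
  rw [← minimalPeriod_add_right j 0]
  refine minimalPeriod_eq_minimalPeriod_iff.2 fun m => ?_
  simp only [IsPeriodicPt, IsFixedPt, iterate_comp_add_right, add_right_iterate, zero_add]
  exact ⟨fun h => eq_zero_of_add_right_invariant_of_sum_eq_prime hp hcard hl (congrFun h),
    fun h => by simp [h]⟩

theorem Fin.addOrderOf_one (k : ℕ) [NeZero k] : addOrderOf (1 : Fin k) = k := by
  open Fin.CommRing in exact CharP.eq (Fin k) (CharP.addOrderOf_one _) (Fin.charP k)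

theorem natCast_dvd_compositae (a : ℕ → ℤ) {n k : ℕ} (hn : n.Prime) (hk : 0 < k)
    (hkn : k < n) : (k : ℤ) ∣ compositae a n k := by
  have : NeZero k := ⟨hk.ne'⟩
  set S := (Nat.antidiagonalTuple k n).filter (fun l => ∀ i, 0 < l i)
  have hsum : ∀ l ∈ S, ∑ i, l i = n :=
    fun l hl => Nat.mem_antidiagonalTuple.1 (mem_filter.1 hl).1
  have hmaps : Set.MapsTo (fun (l : Fin k → ℕ) i => l (i + 1)) S S := by
    intro l hl
    simp only [S, coe_filter, Set.mem_ofPred_eq, Nat.mem_antidiagonalTuple] at hl ⊢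
    exact ⟨(Equiv.sum_comp (Equiv.addRight 1) l).trans hl.1, fun i => hl.2 _⟩
  have hcard : Fintype.card (Fin k) < n := by rwa [Fintype.card_fin]
  have hdvd := natCast_dvd_sum_of_minimalPeriod_eq (w := fun l => ∏ i, a (l i))
    (addOrderOf_pos _) hmaps
    (fun l hl => minimalPeriod_comp_add_right_of_sum_eq_prime hn hcard (hsum l hl) 1)
    (fun l _ => Equiv.prod_comp (Equiv.addRight 1) fun i => a (l i))
  rwa [Fin.addOrderOf_one] at hdvd

theorem stmt_1 (a : ℕ → ℤ) (n : ℕ) (hn : Nat.Prime n) :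
    ∃ m : ℤ, ∑ k ∈ Finset.Icc 1 (n - 1), (compositae a n k : ℚ) / k = m := by
  refine ⟨∑ k ∈ Icc 1 (n - 1), compositae a n k / k, ?_⟩
  rw [Int.cast_sum]
  refine sum_congr rfl fun k hk => ?_
  obtain ⟨hk, hkn⟩ := mem_Icc.1 hk
  have hdvd := natCast_dvd_compositae a hn hk (by have := hn.two_le; omega)
  rw [Int.cast_div_charZero hdvd, Int.cast_natCast]
end

section
/- For every positive integer n, ∑_{k=1}^{n} (n/k) · C(k, n−k) = L(n), the n-th Lucas number, where the sum is taken in ℚ. Here L(1)=1, L(2)=3 and L(n)=L(n-1)+L(n-2). -/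
open Finset BigOperators

/-- Lucas numbers: L 0 = 2, L 1 = 1, L n = L (n-1) + L (n-2). -/
def lucas : ℕ → ℤ
  | 0 => 2
  | 1 => 1
  | n + 2 => lucas (n + 1) + lucas n

/-! Since `(n - k) * C(k, n - k) = k * C(k - 1, n - k - 1)`, each term `n / k * C(k, n - k)` with
`k < n` splits as `C(k, n - k) + C(k - 1, n - k - 1)`, while the term `k = n` is `1`. The two
resulting shallow diagonals of Pascal's triangle sum to `F(n + 1)` and `F(n - 1)`, and
`L(n) = F(n + 1) + F(n - 1)`. -/

open Nat

lemma lucas_succ_eq_fib_add_fib (n : ℕ) : lucas (n + 1) = fib (n + 2) + fib n := by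
  induction n using Nat.twoStepInduction with
  | zero => rfl
  | one => rfl
  | more n ih₁ ih₂ =>
    rw [lucas, ih₁, ih₂, fib_add_two (n := n + 2), fib_add_two (n := n)]
    push_cast
    ring

lemma lucas_eq_fib_add_fib {n : ℕ} (hn : 0 < n) : lucas n = fib (n + 1) + fib (n - 1) := by
  obtain ⟨m, rfl⟩ : ∃ m, n = m + 1 := ⟨n - 1, by omega⟩
  exact lucas_succ_eq_fib_add_fib m

lemma sum_range_choose_eq_fib (n : ℕ) :
    ∑ k ∈ range (n + 1), k.choose (n - k) = fib (n + 1) := by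
  rw [fib_succ_eq_sum_choose, Nat.sum_antidiagonal_eq_sum_range_succ_mk]

lemma sum_Icc_choose_eq_fib {n : ℕ} (hn : 0 < n) :
    ∑ k ∈ Icc 1 n, k.choose (n - k) = fib (n + 1) := by
  rw [← sum_range_choose_eq_fib, range_eq_Ico, sum_eq_sum_Ico_succ_bot (by omega),
    Nat.choose_eq_zero_of_lt (by omega), zero_add]
  rfl

lemma sum_Ico_choose_pred_eq_fib (n : ℕ) :
    ∑ k ∈ Ico 1 n, (k - 1).choose (n - 1 - k) = fib (n - 1) := by
  rcases n with _ | _ | n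
  · rfl
  · rfl
  · rw [sum_Ico_eq_sum_range, add_tsub_cancel_right, ← sum_range_choose_eq_fib]
    refine sum_congr rfl fun k _ => ?_
    congr 1 <;> omega

lemma div_mul_choose_eq {n k : ℕ} (hk : 0 < k) (hkn : k < n) :
    (n : ℚ) / k * k.choose (n - k) = k.choose (n - k) + (k - 1).choose (n - 1 - k) := by
  obtain ⟨a, rfl⟩ : ∃ a, k = a + 1 := ⟨k - 1, by omega⟩
  obtain ⟨b, rfl⟩ : ∃ b, n = a + b + 2 := ⟨n - a - 2, by omega⟩
  have h : ((a + 1 : ℕ) : ℚ) * a.choose b = (a + 1).choose (b + 1) * (b + 1) := by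
    exact_mod_cast add_one_mul_choose_eq a b
  rw [show a + b + 2 - (a + 1) = b + 1 by omega, show a + b + 2 - 1 - (a + 1) = b by omega,
    add_tsub_cancel_right]
  field_simp
  push_cast at h ⊢
  linear_combination -h

theorem stmt_6 (n : ℕ) (hn : 0 < n) :
    ∑ k ∈ Finset.Icc 1 n, (n : ℚ) / k * (k.choose (n - k) : ℚ)
      = (lucas n : ℚ) := by
  have hterms : ∑ k ∈ Ico 1 n, (n : ℚ) / k * k.choose (n - k)
      = ∑ k ∈ Ico 1 n, ((k.choose (n - k) : ℚ) + (k - 1).choose (n - 1 - k)) :=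
    sum_congr rfl fun k hk => div_mul_choose_eq (mem_Ico.1 hk).1 (mem_Ico.1 hk).2
  have hn₀ : (n : ℚ) ≠ 0 := by positivity
  calc ∑ k ∈ Icc 1 n, (n : ℚ) / k * k.choose (n - k)
      = ∑ k ∈ Ico 1 n, (n : ℚ) / k * k.choose (n - k) + 1 := by
        rw [← Ico_add_one_right_eq_Icc, sum_Ico_succ_top hn, tsub_self, choose_zero_right,
          cast_one, mul_one, div_self hn₀]
    _ = ∑ k ∈ Icc 1 n, (k.choose (n - k) : ℚ)
          + ∑ k ∈ Ico 1 n, ((k - 1).choose (n - 1 - k) : ℚ) := by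
        rw [hterms, sum_add_distrib, ← Ico_add_one_right_eq_Icc, sum_Ico_succ_top hn, tsub_self,
          choose_zero_right, cast_one]
        ring
    _ = lucas n := by
        rw [lucas_eq_fib_add_fib hn, ← sum_Icc_choose_eq_fib hn, ← sum_Ico_choose_pred_eq_fib]
        push_cast
        rfl
end

section
/- If p is a prime number, then p divides L(p) − 1, where L(p) is the p-th Lucas number defined by L(1)=1, L(2)=3, L(n)=L(n-1)+L(n-2). -/
open Finset BigOperators

/-!
In any commutative ring, if `α² = α + 1` then `β = 1 - α` satisfies the same equation, and
`L n = αⁿ + βⁿ` (Binet's formula). In characteristic `p` the Frobenius is additive, so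
`L p = αᵖ + βᵖ = (α + β)ᵖ = 1`. Such a ring of characteristic `p` is
`(ZMod p)[X] / (X² - X - 1)`.
-/

section

variable {R : Type*} [CommRing R] {α : R}

theorem lucas_cast_eq_pow_add_pow (hα : α ^ 2 = α + 1) (n : ℕ) :
    (lucas n : R) = α ^ n + (1 - α) ^ n := by
  induction n using lucas.induct with
  | case1 => norm_num [lucas]
  | case2 => simp [lucas]
  | case3 n ih₁ ih₀ =>
    show ((lucas (n + 1) + lucas n : ℤ) : R) = α ^ (n + 2) + (1 - α) ^ (n + 2)
    rw [Int.cast_add, ih₁, ih₀]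
    linear_combination (-α ^ n - (1 - α) ^ n) * hα

theorem lucas_prime_cast_eq_one (p : ℕ) [Fact p.Prime] [CharP R p] (hα : α ^ 2 = α + 1) :
    (lucas p : R) = 1 := by
  rw [lucas_cast_eq_pow_add_pow hα, ← add_pow_char, add_sub_cancel, one_pow]

end

open Polynomial

theorem AdjoinRoot.root_sq_eq_root_add_one (R : Type*) [CommRing R] :
    root (X ^ 2 - X - 1 : R[X]) ^ 2 = root (X ^ 2 - X - 1 : R[X]) + 1 := by
  have h := eval₂_root (X ^ 2 - X - 1 : R[X])
  simp only [eval₂_sub, eval₂_pow, eval₂_X, eval₂_one] at h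
  linear_combination h

theorem stmt_7 (p : ℕ) (hp : Nat.Prime p) : (p : ℤ) ∣ lucas p - 1 := by
  have := Fact.mk hp
  let f : (ZMod p)[X] := X ^ 2 - X - 1
  have : Nontrivial (AdjoinRoot f) := AdjoinRoot.nontrivial f (by
    rw [show f.degree = 2 by unfold f; compute_degree!]; decide)
  have : CharP (AdjoinRoot f) p := charP_of_injective_algebraMap' (ZMod p) p
  rw [← CharP.intCast_eq_zero_iff (AdjoinRoot f) p, Int.cast_sub, Int.cast_one,
    lucas_prime_cast_eq_one p (AdjoinRoot.root_sq_eq_root_add_one (ZMod p)), sub_self]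
end

section
/- The composita of the generating function of the Catalan numbers, F(x) = ∑_{m≥1} C_{m-1} x^m where C_m is the m-th Catalan number, is F^Δ(n,k) = (k/n)·C(2n−k−1, n−1). That is, ∑_{λ₁+...+λ_k=n, λᵢ>0} C_{λ₁−1}···C_{λ_k−1} = (k/n)·C(2n−k−1, n−1) for all 1 ≤ k ≤ n. -/
open Finset BigOperators

/-!
The shifted Catalan series `F = X · C(X)` satisfies `F = X + F²`, since `C = 1 + X C²`. Hence
`F^(k+1) = X F^k + F^(k+2)`, and comparing coefficients of `X^n` gives a recurrence for the
compositae `[X^n] F^k`. The ballot numbers `C(2n-k-1, n-1) - C(2n-k-1, n)`, which equal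
`(k/n) C(2n-k-1, n-1)`, satisfy the same recurrence by Pascal's rule and agree with the compositae
at `k = 0` and `k = 1`.
-/

open PowerSeries

theorem PowerSeries.coeff_pow_eq_sum_antidiagonalTuple {R : Type*} [CommSemiring R]
    (F : R⟦X⟧) (k n : ℕ) :
    coeff n (F ^ k) = ∑ l ∈ Nat.antidiagonalTuple k n, ∏ i, coeff (l i) F := by
  rw [← Fin.prod_const, coeff_prod, ← piAntidiag_univ_fin_eq_antidiagonalTuple, finsuppAntidiag,
    sum_map, ← sum_attach (piAntidiag univ n)]
  rfl

theorem compositae_eq_coeff_pow (a : ℕ → ℤ) (F : ℤ⟦X⟧) (hF₀ : constantCoeff F = 0)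
    (hF : ∀ m, 0 < m → coeff m F = a m) (n k : ℕ) :
    compositae a n k = coeff n (F ^ k) := by
  rw [coeff_pow_eq_sum_antidiagonalTuple, compositae, sum_filter]
  refine sum_congr rfl fun l _ => ?_
  split_ifs with hpos
  · exact prod_congr rfl fun i _ => (hF _ (hpos i)).symm
  · obtain ⟨i, hi⟩ := not_forall.mp hpos
    refine (prod_eq_zero (mem_univ i) ?_).symm
    rw [Nat.eq_zero_of_not_pos hi, coeff_zero_eq_constantCoeff_apply, hF₀]

noncomputable def shiftedCatalanSeries : ℤ⟦X⟧ := X * map (Nat.castRingHom ℤ) catalanSeries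

@[simp]
theorem constantCoeff_shiftedCatalanSeries : constantCoeff shiftedCatalanSeries = 0 := by
  simp [shiftedCatalanSeries]

@[simp]
theorem coeff_succ_shiftedCatalanSeries (m : ℕ) :
    coeff (m + 1) shiftedCatalanSeries = catalan m := by
  simp [shiftedCatalanSeries, coeff_succ_X_mul]

theorem shiftedCatalanSeries_eq_X_add_sq :
    shiftedCatalanSeries = X + shiftedCatalanSeries ^ 2 := by
  have h := congrArg (map (Nat.castRingHom ℤ)) catalanSeries_sq_mul_X_add_one
  simp only [map_add, map_mul, map_pow, map_X, map_one] at h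
  rw [shiftedCatalanSeries]
  linear_combination (-X) * h

theorem coeff_succ_shiftedCatalanSeries_pow_succ (n k : ℕ) :
    coeff (n + 1) (shiftedCatalanSeries ^ (k + 1)) =
      coeff n (shiftedCatalanSeries ^ k) + coeff (n + 1) (shiftedCatalanSeries ^ (k + 2)) := by
  have h : shiftedCatalanSeries ^ (k + 1) =
      X * shiftedCatalanSeries ^ k + shiftedCatalanSeries ^ (k + 2) := by
    linear_combination shiftedCatalanSeries ^ k * shiftedCatalanSeries_eq_X_add_sq
  rw [h, map_add, coeff_succ_X_mul]

def ballot (n k : ℕ) : ℤ := (2 * n - k - 1).choose (n - 1) - (2 * n - k - 1).choose n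

theorem mul_ballot {n k : ℕ} (hn : 1 ≤ n) (hkn : k ≤ n) :
    n * ballot n k = k * (2 * n - k - 1).choose (n - 1) := by
  have h := Nat.choose_succ_right_eq (2 * n - k - 1) (n - 1)
  rw [Nat.sub_add_cancel hn, show 2 * n - k - 1 - (n - 1) = n - k by omega] at h
  have h' : ((2 * n - k - 1).choose n : ℤ) * n = (2 * n - k - 1).choose (n - 1) * (n - k) := by
    exact_mod_cast h
  rw [ballot]
  linear_combination -h'

theorem ballot_zero {n : ℕ} (hn : 1 ≤ n) : ballot n 0 = 0 := by
  have h := mul_ballot hn (Nat.zero_le n)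
  simp only [Nat.cast_zero, zero_mul, mul_eq_zero, Nat.cast_eq_zero] at h
  exact h.resolve_left (by omega)

theorem ballot_one {n : ℕ} (hn : 1 ≤ n) : ballot n 1 = catalan (n - 1) := by
  have h := mul_ballot hn hn
  obtain ⟨m, rfl⟩ := Nat.exists_eq_add_of_le' hn
  have hcat : ((m + 1) * catalan m : ℕ) = (2 * m).choose m := by
    rw [succ_mul_catalan_eq_centralBinom, Nat.centralBinom]
  rw [show 2 * (m + 1) - 1 - 1 = 2 * m by omega, Nat.add_sub_cancel] at h
  refine mul_left_cancel₀ (show ((m + 1 : ℕ) : ℤ) ≠ 0 by positivity) ?_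
  rw [h, Nat.add_sub_cancel, Nat.cast_one, one_mul]
  exact_mod_cast hcat.symm

theorem ballot_succ {m k : ℕ} (hkm : k + 1 ≤ m) :
    ballot (m + 1) (k + 1) = ballot m k + ballot (m + 1) (k + 2) := by
  obtain ⟨j, rfl⟩ := Nat.exists_eq_add_of_le' (show 1 ≤ m by omega)
  obtain ⟨N, hN⟩ : ∃ N, 2 * (j + 1) - k - 1 = N := ⟨_, rfl⟩
  simp only [ballot, Nat.add_sub_cancel]
  rw [show 2 * (j + 1 + 1) - (k + 1) - 1 = N + 1 by omega,
    show 2 * (j + 1 + 1) - (k + 2) - 1 = N by omega, hN,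
    Nat.choose_succ_succ N j, Nat.choose_succ_succ N (j + 1)]
  push_cast
  ring

theorem coeff_shiftedCatalanSeries_pow {n k : ℕ} (hn : 1 ≤ n) (hkn : k ≤ n) :
    coeff n (shiftedCatalanSeries ^ k) = ballot n k := by
  induction k using Nat.twoStepInduction generalizing n with
  | zero => rw [ballot_zero hn, pow_zero, coeff_one, if_neg (by omega)]
  | one =>
    obtain ⟨m, rfl⟩ := Nat.exists_eq_add_of_le' hn
    rw [pow_one, coeff_succ_shiftedCatalanSeries, ballot_one hn, Nat.add_sub_cancel]
  | more k ih₀ ih₁ =>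
    obtain ⟨m, rfl⟩ := Nat.exists_eq_add_of_le' hn
    have h := coeff_succ_shiftedCatalanSeries_pow_succ m k
    rw [ih₀ (by omega) (by omega), ih₁ hn (by omega), ballot_succ (by omega)] at h
    linarith

theorem stmt_14 (n k : ℕ) (hk : 1 ≤ k) (hkn : k ≤ n) :
    (compositae (fun m => (catalan (m - 1) : ℤ)) n k : ℚ)
      = (k : ℚ) / n * ((2 * n - k - 1).choose (n - 1) : ℚ) := by
  have hn : 1 ≤ n := hk.trans hkn
  have hcoeff : ∀ m, 0 < m → coeff m shiftedCatalanSeries = (catalan (m - 1) : ℤ) := by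
    intro m hm
    obtain ⟨j, rfl⟩ := Nat.exists_eq_add_of_le' hm
    simp
  rw [compositae_eq_coeff_pow _ _ constantCoeff_shiftedCatalanSeries hcoeff,
    coeff_shiftedCatalanSeries_pow hn hkn]
  have h : (n : ℚ) * ballot n k = k * (2 * n - k - 1).choose (n - 1) := by
    exact_mod_cast mul_ballot hn hkn
  field_simp
  linear_combination h
end

section
/- Define the sequence b(n) = n · ∑_{k=1}^{n} (1/k)·C(k, n−k) (a rational number a priori). Then b(n) is an integer for all n ≥ 1 and satisfies the Lucas recurrence b(1)=1, b(2)=3, b(n)=b(n-1)+b(n-2). -/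
/-!
Writing `n + 1 = (i + 1) + j` for `i + j = n`, the term `(n + 1)/(i + 1) · C(i + 1, j)` of
`b (n + 1)` splits as `C(i + 1, j) + j/(i + 1) · C(i + 1, j) = C(i + 1, j) + C(i, j - 1)`.
Both halves are shallow diagonal sums of Pascal's triangle, i.e. Fibonacci numbers, so
`b (n + 1) = F (n + 2) + F n` is the Lucas number `L (n + 1)`.
-/

open Finset BigOperators

def b (n : ℕ) : ℚ :=
  n * ∑ k ∈ Finset.Icc 1 n, (1 : ℚ) / k * (k.choose (n - k) : ℚ)

open Nat

theorem sum_antidiagonal_succ_choose_eq_fib (n : ℕ) :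
    ∑ p ∈ antidiagonal n, (p.1 + 1).choose p.2 = fib (n + 2) := by
  rw [fib_succ_eq_sum_choose (n + 1), Nat.sum_antidiagonal_succ, choose_zero_succ, zero_add]

theorem sum_antidiagonal_div_mul_succ_choose_eq_fib (n : ℕ) :
    ∑ p ∈ antidiagonal n, (p.2 : ℚ) / (p.1 + 1) * (p.1 + 1).choose p.2 = fib n := by
  cases n with
  | zero => simp
  | succ n =>
    rw [Nat.sum_antidiagonal_succ', fib_succ_eq_sum_choose, cast_sum]
    simp only [CharP.cast_eq_zero, zero_div, zero_mul, zero_add]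
    refine sum_congr rfl fun p _ => ?_
    have h := add_one_mul_choose_eq p.1 p.2
    rw [div_mul_eq_mul_div, div_eq_iff (by positivity)]
    exact_mod_cast by linarith [h]

theorem b_succ_eq_sum_antidiagonal (n : ℕ) :
    b (n + 1) = ∑ p ∈ antidiagonal n, ((n + 1 : ℕ) : ℚ) / (p.1 + 1) * (p.1 + 1).choose p.2 := by
  rw [b, mul_sum, sum_antidiagonal_eq_sum_range_succ_mk, ← Ico_add_one_right_eq_Icc,
    sum_Ico_eq_sum_range]
  refine sum_congr rfl fun i _ => ?_
  rw [add_comm 1 i, Nat.add_sub_add_right]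
  push_cast
  ring

theorem b_succ_eq_fib_add_fib (n : ℕ) : b (n + 1) = fib (n + 2) + fib n := by
  rw [b_succ_eq_sum_antidiagonal, ← sum_antidiagonal_succ_choose_eq_fib n,
    ← sum_antidiagonal_div_mul_succ_choose_eq_fib n, cast_sum, ← sum_add_distrib]
  refine sum_congr rfl fun p hp => ?_
  rw [← mem_antidiagonal.1 hp]
  field_simp
  push_cast
  ring

theorem stmt_16 :
    (∀ n : ℕ, 1 ≤ n → ∃ m : ℤ, b n = (m : ℚ)) ∧
    b 1 = 1 ∧ b 2 = 3 ∧ ∀ n : ℕ, 3 ≤ n → b n = b (n - 1) + b (n - 2) := by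
  refine ⟨fun n hn => ?_, by simp [b_succ_eq_fib_add_fib],
    by norm_num [b_succ_eq_fib_add_fib, fib_add_two], fun n hn => ?_⟩
  · obtain ⟨n, rfl⟩ := exists_add_of_le hn
    exact ⟨fib (n + 2) + fib n, by rw [add_comm, b_succ_eq_fib_add_fib]; push_cast; rfl⟩
  · obtain ⟨n, rfl⟩ : ∃ m, n = m + 3 := ⟨n - 3, by omega⟩
    rw [show n + 3 - 1 = n + 2 by omega, show n + 3 - 2 = n + 1 by omega,
      b_succ_eq_fib_add_fib, b_succ_eq_fib_add_fib, b_succ_eq_fib_add_fib]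
    simp only [fib_add_two]
    push_cast
    ring
end
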